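/- For every positive integer k, the finite combinatorial identity ∑_{n=1}^k (1/n) · Γ(2k-n)/Γ(1+k-n) = (Γ(2k)/Γ(1+k)) · (H_{2k-1} - H_{k-1}) holds, where H_m = ∑_{j=1}^m 1/j. -/

import Mathlib

/-!
Since `(2k-n-1)!/(k-n)! = (k-1)! * C(2k-1-n, k-1)`, the identity is the case `N = 2k-1`,
`K = k-1` of `∑_{n=1}^N C(N-n, K)/n = C(N, K) (H_N - H_K)`. This holds for all `N, K` (terms
with `N - n < K` vanish), and follows by induction on `N`: by Pascal's rule both sides satisfy
`f(N+1, K+1) = f(N, K) + f(N, K+1)`, the right side thanks to `(N+1) C(N, K) = (K+1) C(N+1, K+1)`.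
-/

open scoped BigOperators

noncomputable def H (n : ℕ) : ℝ := ∑ j ∈ Finset.range n, (1:ℝ)/(j+1)

noncomputable def zeta3 : ℝ := ∑' n : ℕ, (1:ℝ)/((n:ℝ)+1)^3

open Finset Nat

lemma H_succ (n : ℕ) : H (n + 1) = H n + 1 / ((n : ℝ) + 1) := by
  simp [H, sum_range_succ]

lemma sum_Icc_one_div_eq_H (N : ℕ) : ∑ n ∈ Icc 1 N, 1 / (n : ℝ) = H N := by
  induction N with
  | zero => simp [H]
  | succ N ih => rw [sum_Icc_succ_top (by omega), ih, H_succ]; push_cast; ring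

theorem sum_Icc_one_div_mul_choose (N K : ℕ) :
    ∑ n ∈ Icc 1 N, 1 / (n : ℝ) * ((N - n).choose K : ℝ) = N.choose K * (H N - H K) := by
  induction N generalizing K with
  | zero => cases K <;> simp
  | succ N ih =>
    cases K with
    | zero =>
      simp only [choose_zero_right, cast_one, mul_one, one_mul, sum_Icc_one_div_eq_H]
      rw [show H 0 = 0 from sum_range_zero _, sub_zero]
    | succ K =>
      have pascal : ∑ n ∈ Icc 1 (N + 1), 1 / (n : ℝ) * ((N + 1 - n).choose (K + 1) : ℝ)
          = ∑ n ∈ Icc 1 N, 1 / (n : ℝ) * ((N - n).choose K : ℝ)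
            + ∑ n ∈ Icc 1 N, 1 / (n : ℝ) * ((N - n).choose (K + 1) : ℝ) := by
        rw [sum_Icc_succ_top (by omega), Nat.sub_self, choose_zero_succ, cast_zero, mul_zero,
          add_zero, ← sum_add_distrib]
        refine sum_congr rfl fun n hn => ?_
        rw [show N + 1 - n = N - n + 1 by grind, choose_succ_succ']
        push_cast
        ring
      have absorb :
          ((N : ℝ) + 1) * N.choose K = (N.choose K + N.choose (K + 1)) * ((K : ℝ) + 1) := by
        exact_mod_cast choose_succ_succ' N K ▸ add_one_mul_choose_eq N K
      rw [pascal, ih, ih, H_succ, H_succ, choose_succ_succ', cast_add]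
      field_simp
      linear_combination absorb

theorem sum_Icc_one_div_mul_add_choose (K L : ℕ) :
    ∑ n ∈ Icc 1 L, 1 / (n : ℝ) * ((K + L - n).choose K : ℝ)
      = (K + L).choose K * (H (K + L) - H K) := by
  rw [← sum_Icc_one_div_mul_choose]
  refine sum_subset (Icc_subset_Icc_right (by omega)) fun n hn hnL => ?_
  simp only [mem_Icc] at hn hnL
  rw [choose_eq_zero_of_lt (by omega), cast_zero, mul_zero]

lemma factorial_add_div_factorial (K L : ℕ) :
    ((K + L)! : ℝ) / L ! = K ! * (K + L).choose K := by
  rw [← add_choose_mul_factorial_mul_factorial K L, add_comm K L, choose_symm_add]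
  push_cast
  field_simp

theorem stmt19_general (k : ℕ) :
    ∑ n ∈ Finset.Icc 1 k, (1 / (n:ℝ)) *
      ((Nat.factorial (2*k - n - 1) : ℝ) / (Nat.factorial (k - n) : ℝ))
    = ((Nat.factorial (2*k - 1) : ℝ) / (Nat.factorial k : ℝ)) * (H (2*k - 1) - H (k - 1)) := by
  have hsum : 2 * k - 1 = (k - 1) + k := by omega
  calc ∑ n ∈ Icc 1 k, 1 / (n : ℝ) * ((2 * k - n - 1)! / (k - n)! : ℝ)
      = (k - 1)! * ∑ n ∈ Icc 1 k, 1 / (n : ℝ) * ((k - 1 + k - n).choose (k - 1) : ℝ) := by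
        rw [mul_sum]
        refine sum_congr rfl fun n hn => ?_
        rw [mem_Icc] at hn
        rw [show 2 * k - n - 1 = (k - 1) + (k - n) by omega, factorial_add_div_factorial,
          show k - 1 + (k - n) = k - 1 + k - n by omega]
        ring
    _ = ((2 * k - 1)! / k ! : ℝ) * (H (2 * k - 1) - H (k - 1)) := by
        rw [sum_Icc_one_div_mul_add_choose, hsum, factorial_add_div_factorial]
        ring

theorem stmt19 (k : ℕ) (hk : 0 < k) :
    ∑ n ∈ Finset.Icc 1 k, (1 / (n:ℝ)) *
      ((Nat.factorial (2*k - n - 1) : ℝ) / (Nat.factorial (k - n) : ℝ))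
    = ((Nat.factorial (2*k - 1) : ℝ) / (Nat.factorial k : ℝ)) * (H (2*k - 1) - H (k - 1)) :=
  stmt19_general k
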